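/- arXiv:1902.09989 — 7 statements merged into one kernel-verified Lean document; each statement's English description precedes it below -/
import Mathlib

section
/- Every complex linear subspace of the algebra of complex-valued functions on a finite set {1,…,n} that is closed under pointwise multiplication is also closed under pointwise complex conjugation. -/
/-!
A function `f` on a finite set takes finitely many values, so by Lagrange interpolation complex
conjugation agrees on them, and at `0`, with a polynomial `p`. Then `p` has no constant term, so
`conj ∘ f = p(f)` is a linear combination of the powers `f ^ (k + 1)`, all of which lie in the subalgebra.
-/

open Polynomial

theorem NonUnitalSubalgebra.pow_succ_mem {R A : Type*} [CommSemiring R] [Semiring A] [Algebra R A]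
    (S : NonUnitalSubalgebra R A) {x : A} (hx : x ∈ S) (k : ℕ) : x ^ (k + 1) ∈ S := by
  induction k with
  | zero => simpa using hx
  | succ k ih => rw [pow_succ]; exact mul_mem ih hx

theorem NonUnitalSubalgebra.aeval_mem_of_coeff_zero_eq_zero {R A : Type*} [CommSemiring R]
    [Semiring A] [Algebra R A] (S : NonUnitalSubalgebra R A) {x : A} (hx : x ∈ S) {p : R[X]}
    (hp : p.coeff 0 = 0) : aeval x p ∈ S := by
  rw [aeval_eq_sum_range, Finset.sum_range_succ', hp, zero_smul, add_zero]
  exact sum_mem fun k _ ↦ SMulMemClass.smul_mem _ (S.pow_succ_mem hx k)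

theorem Polynomial.exists_coeff_zero_eq_zero_and_eval_eq {K : Type*} [Field K] (s : Finset K)
    {g : K → K} (hg : g 0 = 0) : ∃ p : K[X], p.coeff 0 = 0 ∧ ∀ z ∈ s, p.eval z = g z := by
  classical
  have interpolate_eval {z : K} (hz : z ∈ insert 0 s) :
      (Lagrange.interpolate (insert 0 s) id g).eval z = g z :=
    Lagrange.eval_interpolate_at_node g (Set.injOn_id _) hz
  refine ⟨Lagrange.interpolate (insert 0 s) id g, ?_, fun z hz ↦ ?_⟩
  · rw [coeff_zero_eq_eval_zero, interpolate_eval (Finset.mem_insert_self 0 s), hg]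
  · exact interpolate_eval (Finset.mem_insert_of_mem hz)

theorem NonUnitalSubalgebra.comp_mem_of_apply_zero_eq_zero {K ι : Type*} [Field K] [Finite ι]
    (S : NonUnitalSubalgebra K (ι → K)) {f : ι → K} (hf : f ∈ S) {g : K → K} (hg : g 0 = 0) :
    g ∘ f ∈ S := by
  obtain ⟨p, hp0, hpg⟩ :=
    exists_coeff_zero_eq_zero_and_eval_eq (Set.finite_range f).toFinset hg
  have hp : aeval f p = g ∘ f := by
    ext i
    rw [aeval_pi_apply₂, coe_aeval_eq_eval, Function.comp_apply]
    exact hpg (f i) (by simp)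
  exact hp ▸ S.aeval_mem_of_coeff_zero_eq_zero hf hp0

/-- Every complex linear subspace of `ℓ∞ₙ = (Fin n → ℂ)` that is closed under pointwise
multiplication is also closed under pointwise complex conjugation. -/
theorem subalgebra_linf_selfAdjoint (n : ℕ) (S : Set (Fin n → ℂ))
    (h0 : (0 : Fin n → ℂ) ∈ S)
    (hadd : ∀ f ∈ S, ∀ g ∈ S, f + g ∈ S)
    (hsmul : ∀ (c : ℂ), ∀ f ∈ S, c • f ∈ S)
    (hmul : ∀ f ∈ S, ∀ g ∈ S, f * g ∈ S) :
    ∀ f ∈ S, (fun i => (starRingEnd ℂ) (f i)) ∈ S := by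
  let A : NonUnitalSubalgebra ℂ (Fin n → ℂ) :=
    { carrier := S
      zero_mem' := h0
      add_mem' := fun hf hg ↦ hadd _ hf _ hg
      mul_mem' := fun hf hg ↦ hmul _ hf _ hg
      smul_mem' := fun c _ hf ↦ hsmul c _ hf }
  intro f hf
  exact A.comp_mem_of_apply_zero_eq_zero hf (map_zero (starRingEnd ℂ))
end

section
/- Let 𝒜 ⊆ Mₙ(ℂ) be an operator algebra whose complex dimension d satisfies 2d ≥ n² + 2 (i.e., d ≥ n²/2 + 1). Then 𝒜 is not antisymmetric: there exists A ∈ 𝒜 ∩ 𝒜* that is not a complex scalar multiple of the identity matrix. -/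
/-!
The span `V` of `𝒜` and its conjugate `V* = {A* : A ∈ V}` are both complex subspaces of
dimension `d` of the `n²`-dimensional space `Mₙ(ℂ)` (conjugation is conjugate-linear and
bijective, so it preserves complex dimension). Hence `dim (V ∩ V*) ≥ 2d - n² ≥ 2`, so
`𝒜 ∩ 𝒜* = V ∩ V*` cannot lie in the line `ℂ·I`.
-/

open Matrix

noncomputable section

abbrev Mat (n : ℕ) := Matrix (Fin n) (Fin n) ℂ

/-- An operator algebra: a complex linear subspace of matrices closed under multiplication. -/
def IsOpAlg {n : ℕ} (S : Set (Mat n)) : Prop :=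
  0 ∈ S ∧ (∀ A ∈ S, ∀ B ∈ S, A + B ∈ S) ∧ (∀ (c : ℂ), ∀ A ∈ S, c • A ∈ S) ∧
    (∀ A ∈ S, ∀ B ∈ S, A * B ∈ S)

open Module

namespace Submodule

variable {K E : Type*} [Field K] [StarRing K] [AddCommGroup E] [Module K E] [StarAddMonoid E]
  [StarModule K E]

/-- The conjugate subspace `V* = {x* : x ∈ V}`, written as a preimage since `star` is an
involution. -/
def star (V : Submodule K E) : Submodule K E :=
  V.comap (starLinearEquiv K (A := E)).toLinearMap

@[simp]
theorem mem_star {V : Submodule K E} {x : E} : x ∈ V.star ↔ Star.star x ∈ V := Iff.rfl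

theorem finrank_star (V : Submodule K E) : finrank K V.star = finrank K V := by
  let conj : V.star ≃+ V :=
    { toFun x := ⟨Star.star x.1, x.2⟩
      invFun x := ⟨Star.star x.1, by simp⟩
      left_inv x := by simp
      right_inv x := by simp
      map_add' x y := by ext; simp }
  have := rank_eq_of_equiv_equiv (Star.star : K → K) conj star_involutive.bijective
    (fun r x => by ext; simp [conj, star_smul])
  simp [finrank, this]

theorem two_mul_finrank_le_finrank_add_finrank_inf_star [FiniteDimensional K E]
    (V : Submodule K E) : 2 * finrank K V ≤ finrank K E + finrank K ↥(V ⊓ V.star) := by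
  have := finrank_sup_add_finrank_inf_eq V V.star
  have := (V ⊔ V.star).finrank_le
  rw [finrank_star] at *
  omega

end Submodule

theorem Submodule.exists_mem_notMem_span_singleton {K E : Type*} [Field K] [AddCommGroup E]
    [Module K E] {W : Submodule K E} [FiniteDimensional K W] (hW : 2 ≤ finrank K W) (x : E) :
    ∃ y ∈ W, y ∉ K ∙ x := by
  by_contra! h
  have : finrank K W ≤ finrank K (K ∙ x) := finrank_mono h
  have : finrank K (K ∙ x) ≤ 1 := (finrank_span_le_card ({x} : Set E)).trans (by simp)
  omega

theorem IsOpAlg.coe_span {n : ℕ} {S : Set (Mat n)} (hS : IsOpAlg S) :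
    (Submodule.span ℂ S : Set (Mat n)) = S := by
  obtain ⟨h0, hadd, hsmul, -⟩ := hS
  refine subset_antisymm (fun A hA => ?_) Submodule.subset_span
  induction hA using Submodule.span_induction with
  | mem A h => exact h
  | zero => exact h0
  | add A B _ _ hA hB => exact hadd A hA B hB
  | smul c A _ hA => exact hsmul c A hA

/-- An operator algebra in `Mₙ(ℂ)` of complex dimension `d` with `2d ≥ n² + 2` is not
antisymmetric: it contains an element of `𝒜 ∩ 𝒜*` which is not a scalar multiple of `I`. -/
theorem not_antisym_of_large_dim (n : ℕ) (S : Set (Mat n)) (hS : IsOpAlg S)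
    (hdim : n ^ 2 + 2 ≤ 2 * Module.finrank ℂ (Submodule.span ℂ S)) :
    ∃ A ∈ S, Aᴴ ∈ S ∧ ∀ c : ℂ, A ≠ c • (1 : Mat n) := by
  set V := Submodule.span ℂ S
  have hV (A : Mat n) : A ∈ V ↔ A ∈ S := by rw [← SetLike.mem_coe, hS.coe_span]
  have hE : finrank ℂ (Mat n) = n ^ 2 := by rw [finrank_matrix]; simp [sq]
  have hinf := V.two_mul_finrank_le_finrank_add_finrank_inf_star
  obtain ⟨A, ⟨hA, hA'⟩, hA1⟩ :=
    Submodule.exists_mem_notMem_span_singleton (W := V ⊓ V.star) (by omega) (1 : Mat n)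
  refine ⟨A, (hV _).1 hA, (hV _).1 hA', fun c hc => hA1 ?_⟩
  exact hc ▸ Submodule.smul_mem _ c (Submodule.mem_span_singleton_self 1)
end
end

section
/- Let 𝒜 ⊆ Mₙ(ℂ) be an operator algebra, let E be a semi-invariant subspace of ℂⁿ for 𝒜, and let P be the orthogonal projection onto E. Suppose F is a subspace of E that is semi-invariant for the compression algebra {PAP : A ∈ 𝒜}, i.e., F = F₁ ∩ F₂ᗮ for some subspaces F₂ ⊆ F₁ ⊆ E such that (PAP)(Fᵢ) ⊆ Fᵢ for all A ∈ 𝒜 and i = 1,2. Then F is semi-invariant for 𝒜. -/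
open Matrix ContinuousLinearMap

noncomputable section

abbrev Euc (n : ℕ) := EuclideanSpace ℂ (Fin n)

/-- Antisymmetry: `𝒜 ∩ 𝒜* ⊆ ℂ·I`. -/
def Antisym {n : ℕ} (S : Set (Mat n)) : Prop :=
  ∀ A ∈ S, Aᴴ ∈ S → ∃ c : ℂ, A = c • (1 : Mat n)

/-- The operator on Euclidean space corresponding to a matrix. -/
def opOf {n : ℕ} (A : Mat n) : Euc n →L[ℂ] Euc n := Matrix.toEuclideanCLM (𝕜 := ℂ) A

/-- Orthogonal projection onto `E` as an endomorphism of `ℂⁿ`. -/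
def oproj {n : ℕ} (E : Submodule ℂ (Euc n)) : Euc n →L[ℂ] Euc n :=
  E.subtypeL ∘L E.orthogonalProjectionOnto

def InvariantSub {n : ℕ} (S : Set (Mat n)) (E : Submodule ℂ (Euc n)) : Prop :=
  ∀ A ∈ S, ∀ x ∈ E, opOf A x ∈ E

def SemiInvariantSub {n : ℕ} (S : Set (Mat n)) (E : Submodule ℂ (Euc n)) : Prop :=
  ∃ E₁ E₂ : Submodule ℂ (Euc n), InvariantSub S E₁ ∧ InvariantSub S E₂ ∧ E₂ ≤ E₁ ∧ E = E₁ ⊓ E₂ᗮ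

/-- The compression `PAP` of a matrix to a subspace. -/
def compr {n : ℕ} (E : Submodule ℂ (Euc n)) (A : Mat n) : Euc n →L[ℂ] Euc n :=
  oproj E ∘L opOf A ∘L oproj E

/-- Hereditary antisymmetry: the compression to every semi-invariant subspace is antisymmetric. -/
def HerAntisym {n : ℕ} (S : Set (Mat n)) : Prop :=
  ∀ E : Submodule ℂ (Euc n), SemiInvariantSub S E →
    ∀ A ∈ S, ∀ B ∈ S, compr E A = ContinuousLinearMap.adjoint (compr E B) →
      ∃ c : ℂ, compr E A = c • oproj E

/-!
Write `E = E₁ ⊓ E₂ᗮ`, so that `E₁ = E₂ ⊕ E` orthogonally. For `x ∈ E` and `A ∈ 𝒜` the vector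
`A x ∈ E₁` splits as `(A x - P A x) + P A x` with `A x - P A x ∈ E₂` and `P A x = (PAP) x`.
Hence if `G ⊆ E` is invariant for the compressions, `E₂ ⊔ G` is invariant for `𝒜`, and
`F₁ ⊓ F₂ᗮ = (E₂ ⊔ F₁) ⊓ (E₂ ⊔ F₂)ᗮ` because `F₁ ⊥ E₂`.
-/

namespace Submodule

variable {𝕜 V : Type*} [RCLike 𝕜] [NormedAddCommGroup V] [InnerProductSpace 𝕜 V]

theorem sup_inf_orthogonal_of_le_orthogonal {K G : Submodule 𝕜 V} (h : G ≤ Kᗮ) :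
    (K ⊔ G) ⊓ Kᗮ = G := by
  rw [sup_comm, sup_inf_assoc_of_le K h, inf_orthogonal_eq_bot, sup_bot_eq]

theorem sub_starProjection_mem_of_mem_sup {K E : Submodule 𝕜 V} [E.HasOrthogonalProjection]
    (h : E ≤ Kᗮ) {y : V} (hy : y ∈ K ⊔ E) : y - E.starProjection y ∈ K := by
  obtain ⟨k, hk, e, he, rfl⟩ := mem_sup.mp hy
  have hk_zero : E.starProjection k = 0 :=
    (starProjection_apply_eq_zero_iff E).mpr (IsOrtho.symm h hk)
  rwa [map_add, hk_zero, starProjection_eq_self_iff.mpr he, zero_add, add_sub_cancel_right]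

end Submodule

open Submodule

theorem compr_apply_of_mem {n : ℕ} {E : Submodule ℂ (Euc n)} (A : Mat n) {x : Euc n}
    (hx : x ∈ E) : compr E A x = E.starProjection (opOf A x) := by
  have hPx : oproj E x = x := starProjection_eq_self_iff.mpr hx
  change oproj E (opOf A (oproj E x)) = _
  rw [hPx]
  rfl

theorem InvariantSub.sup_of_mapsTo_compr {n : ℕ} {S : Set (Mat n)}
    {E₁ E₂ G : Submodule ℂ (Euc n)}
    (h₁ : InvariantSub S E₁) (h₂ : InvariantSub S E₂) (hle : E₂ ≤ E₁) (hG : G ≤ E₁ ⊓ E₂ᗮ)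
    (hG_inv : ∀ A ∈ S, ∀ x ∈ G, compr (E₁ ⊓ E₂ᗮ) A x ∈ G) : InvariantSub S (E₂ ⊔ G) := by
  set E := E₁ ⊓ E₂ᗮ
  have hE₁ : E₁ = E₂ ⊔ E := by
    rw [show E = E₂ᗮ ⊓ E₁ from inf_comm _ _, sup_orthogonal_inf_of_hasOrthogonalProjection hle]
  intro A hA x hx
  obtain ⟨e, he, g, hg, rfl⟩ := mem_sup.mp hx
  rw [map_add]
  refine add_mem (mem_sup_left (h₂ A hA e he)) ?_
  have hy : opOf A g ∈ E₂ ⊔ E := hE₁ ▸ h₁ A hA g (hG hg).1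
  have hPy : E.starProjection (opOf A g) ∈ G := compr_apply_of_mem A (hG hg) ▸ hG_inv A hA g hg
  rw [← sub_add_cancel (opOf A g) (E.starProjection (opOf A g))]
  exact add_mem (mem_sup_left (sub_starProjection_mem_of_mem_sup inf_le_right hy))
    (mem_sup_right hPy)

theorem semiInvariant_of_semiInvariant_compression_general (n : ℕ) (S : Set (Mat n))
    (E : Submodule ℂ (Euc n)) (hE : SemiInvariantSub S E)
    (F F₁ F₂ : Submodule ℂ (Euc n)) (hF₂₁ : F₂ ≤ F₁) (hF₁E : F₁ ≤ E)
    (h1 : ∀ A ∈ S, ∀ x ∈ F₁, compr E A x ∈ F₁)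
    (h2 : ∀ A ∈ S, ∀ x ∈ F₂, compr E A x ∈ F₂)
    (hF : F = F₁ ⊓ F₂ᗮ) :
    SemiInvariantSub S F := by
  obtain ⟨E₁, E₂, hE₁, hE₂, hE₂₁, rfl⟩ := hE
  refine ⟨E₂ ⊔ F₁, E₂ ⊔ F₂, hE₁.sup_of_mapsTo_compr hE₂ hE₂₁ hF₁E h1,
    hE₁.sup_of_mapsTo_compr hE₂ hE₂₁ (hF₂₁.trans hF₁E) h2, sup_le_sup_left hF₂₁ _, ?_⟩
  rw [hF, ← inf_orthogonal, ← inf_assoc,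
    sup_inf_orthogonal_of_le_orthogonal (hF₁E.trans inf_le_right)]

/-- A subquotient of a subquotient is a subquotient: if `E` is semi-invariant for `𝒜` and
`F = F₁ ∩ F₂ᗮ ⊆ E` with `F₂ ⊆ F₁ ⊆ E` invariant for the compression `{PAP : A ∈ 𝒜}`, then
`F` is semi-invariant for `𝒜`. -/
theorem semiInvariant_of_semiInvariant_compression (n : ℕ) (S : Set (Mat n)) (hS : IsOpAlg S)
    (E : Submodule ℂ (Euc n)) (hE : SemiInvariantSub S E)
    (F F₁ F₂ : Submodule ℂ (Euc n)) (hF₂₁ : F₂ ≤ F₁) (hF₁E : F₁ ≤ E)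
    (h1 : ∀ A ∈ S, ∀ x ∈ F₁, compr E A x ∈ F₁)
    (h2 : ∀ A ∈ S, ∀ x ∈ F₂, compr E A x ∈ F₂)
    (hF : F = F₁ ⊓ F₂ᗮ) :
    SemiInvariantSub S F :=
  semiInvariant_of_semiInvariant_compression_general n S E hE F F₁ F₂ hF₂₁ hF₁E h1 h2 hF
end
end

section
/- Let n₁,…,n_k be positive integers with n₁ + ⋯ + n_k = n and let A ∈ Mₙ(ℂ) be (n₁,…,n_k)-Jordanesque. Let λ be a nonzero diagonal entry of A. Then the diagonal matrix D defined by D_{ii} = 1 if A_{ii} = λ and D_{ii} = 0 otherwise belongs to the (possibly non-unital) algebra generated by A; that is, D lies in the complex linear span of {A^m : m ≥ 1}. -/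
/-! Write `A = Δ + N` with `Δ` the diagonal of `A` and `N` strictly upper triangular, so that
`N ^ n = 0`. Since the diagonal is constant on blocks, the indicator `E_μ` of the diagonal
positions carrying `μ` is an idempotent commuting with `A`, and `E_μ (A - μ) = E_μ N`; hence
`E_μ (A - μ) ^ n = 0`. So if `p ≡ c(μ) mod (X - μ) ^ n` for every diagonal entry `μ`, then
`E_μ p(A) = c(μ) E_μ` for all `μ`, i.e. `p(A)` is the diagonal matrix with entries `c(A i i)`.
By the Chinese remainder theorem take `p ≡ 1` at `λ` and `p ≡ 0` at the other diagonal entries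
and at `0`; the last condition, compatible with the first because `λ ≠ 0`, makes `p(A)` a
combination of positive powers of `A`. -/

open Matrix

noncomputable section

open Polynomial

namespace Matrix

variable {ι R : Type*} [Fintype ι] [DecidableEq ι] [CommRing R]

theorem pow_card_eq_zero_of_isUpperTriangular [LinearOrder ι] {N : Matrix ι ι R}
    (hN : N.IsUpperTriangular) (hdiag : ∀ i, N i i = 0) : N ^ Fintype.card ι = 0 := by
  simpa [charpoly_of_isUpperTriangular N hN, hdiag] using aeval_self_charpoly N

theorem commute_diagonal_comp_diag {A : Matrix ι ι R}
    (hA : ∀ i j, A i j ≠ 0 → A i i = A j j) (g : R → R) :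
    Commute (diagonal fun i => g (A i i)) A := by
  ext i j
  rw [diagonal_mul, mul_diagonal]
  by_cases hij : A i j = 0
  · simp [hij]
  · rw [hA i j hij, mul_comm]

section Indicator

variable [DecidableEq R]

def diagonalIndicator (A : Matrix ι ι R) (μ : R) : Matrix ι ι R :=
  diagonal fun i => if A i i = μ then 1 else 0

theorem isIdempotentElem_diagonalIndicator (A : Matrix ι ι R) (μ : R) :
    IsIdempotentElem (diagonalIndicator A μ) := by
  rw [IsIdempotentElem, diagonalIndicator, diagonal_mul_diagonal]
  congr 1; ext i; split_ifs <;> simp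

theorem diagonalIndicator_mul_pow_sub_eq_zero [LinearOrder ι] {A : Matrix ι ι R}
    (hU : A.IsUpperTriangular) (hA : ∀ i j, A i j ≠ 0 → A i i = A j j) (μ : R) {m : ℕ}
    (hm : Fintype.card ι ≤ m) :
    diagonalIndicator A μ * (A - algebraMap R _ μ) ^ m = 0 := by
  set E := diagonalIndicator A μ with hE
  set N := A - diagonal fun i => A i i
  have hNpow : N ^ m = 0 := pow_eq_zero_of_le hm <|
    pow_card_eq_zero_of_isUpperTriangular (hU.sub (blockTriangular_diagonal _)) (by simp [N])
  have hEA : Commute E A := commute_diagonal_comp_diag hA fun x => if x = μ then 1 else 0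
  have hEN : Commute E N := hEA.sub_right (commute_diagonal _ _)
  have hEshift : E * (A - algebraMap R _ μ) = E * N := by
    have hscalar : algebraMap R (Matrix ι ι R) μ = diagonal fun _ => μ :=
      algebraMap_eq_diagonal μ
    rw [← sub_add_sub_cancel A (diagonal fun i => A i i), mul_add, add_eq_left, hscalar,
      diagonal_sub, hE, diagonalIndicator, diagonal_mul_diagonal, diagonal_eq_zero]
    ext i
    split_ifs with h <;> simp [h]
  calc E * (A - algebraMap R _ μ) ^ m
      = E * (E * (A - algebraMap R _ μ)) ^ m := by
        rw [(hEA.sub_right (Algebra.commutes μ E).symm).mul_pow, ← mul_assoc,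
          ← pow_succ', (isIdempotentElem_diagonalIndicator A μ).pow_succ_eq]
    _ = 0 := by rw [hEshift, hEN.mul_pow, hNpow, mul_zero, mul_zero]

theorem diagonalIndicator_mul_aeval_eq_smul [LinearOrder ι] {A : Matrix ι ι R}
    (hU : A.IsUpperTriangular) (hA : ∀ i j, A i j ≠ 0 → A i i = A j j) {p : R[X]} {μ c : R}
    {m : ℕ} (hm : Fintype.card ι ≤ m) (hp : (X - C μ) ^ m ∣ p - C c) :
    diagonalIndicator A μ * aeval A p = c • diagonalIndicator A μ := by
  obtain ⟨r, hr⟩ := hp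
  rw [sub_eq_iff_eq_add'.1 hr, map_add, map_mul, map_pow, map_sub, aeval_X, aeval_C, aeval_C,
    mul_add, ← mul_assoc, diagonalIndicator_mul_pow_sub_eq_zero hU hA μ hm, zero_mul, add_zero,
    ← Algebra.commutes, ← Algebra.smul_def]

end Indicator

theorem aeval_eq_diagonal_of_dvd [LinearOrder ι] {A : Matrix ι ι R}
    (hU : A.IsUpperTriangular) (hA : ∀ i j, A i j ≠ 0 → A i i = A j j) {p : R[X]} (c : R → R)
    {m : ℕ} (hm : Fintype.card ι ≤ m) (hp : ∀ i, (X - C (A i i)) ^ m ∣ p - C (c (A i i))) :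
    aeval A p = diagonal fun i => c (A i i) := by
  classical
  ext i j
  have hrow := congrFun₂ (diagonalIndicator_mul_aeval_eq_smul hU hA hm (hp i)) i j
  simpa [diagonalIndicator, diagonal_mul, diagonal_apply] using hrow

end Matrix

namespace Polynomial

theorem exists_dvd_sub_one_and_forall_dvd {K : Type*} [Field K] {lam : K} {T : Finset K}
    (hT : lam ∉ T) (m : ℕ) :
    ∃ p : K[X], (X - C lam) ^ m ∣ p - 1 ∧ ∀ μ ∈ T, (X - C μ) ^ m ∣ p := by
  have hcop : IsCoprime (∏ μ ∈ T, (X - C μ) ^ m) ((X - C lam) ^ m) :=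
    IsCoprime.prod_left fun μ hμ =>
      (isCoprime_X_sub_C_of_isUnit_sub (sub_ne_zero.2 (ne_of_mem_of_not_mem hμ hT)).isUnit).pow
  obtain ⟨a, b, hab⟩ := hcop
  exact ⟨a * ∏ μ ∈ T, (X - C μ) ^ m, ⟨-b, by rw [← hab]; ring⟩,
    fun μ hμ => Dvd.dvd.mul_left (Finset.dvd_prod_of_mem _ hμ) a⟩

theorem aeval_mem_span_pow_of_X_dvd {R S : Type*} [CommSemiring R] [Semiring S] [Algebra R S]
    (a : S) {p : R[X]} (hp : X ∣ p) :
    aeval a p ∈ Submodule.span R {b | ∃ m : ℕ, 1 ≤ m ∧ b = a ^ m} := by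
  obtain ⟨q, rfl⟩ := hp
  rw [map_mul, aeval_X, aeval_eq_sum_range, Finset.mul_sum]
  refine Submodule.sum_mem _ fun k _ => ?_
  rw [mul_smul_comm, ← pow_succ']
  exact Submodule.smul_mem _ _ (Submodule.subset_span ⟨k + 1, k.succ_pos, rfl⟩)

end Polynomial

theorem diagonal_indicator_mem_span_powers_general (n k : ℕ) (f : Fin n → Fin k)
    (A : Mat n)
    (hblock : ∀ i j : Fin n, (f i ≠ f j ∨ j < i) → A i j = 0)
    (hdiag : ∀ i j : Fin n, f i = f j → A i i = A j j)
    (lam : ℂ) (hlam : lam ≠ 0) :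
    (Matrix.diagonal fun i => if A i i = lam then (1 : ℂ) else 0) ∈
      Submodule.span ℂ {B : Mat n | ∃ m : ℕ, 1 ≤ m ∧ B = A ^ m} := by
  have hU : A.IsUpperTriangular := fun i j hji => hblock i j (Or.inr hji)
  have hA : ∀ i j, A i j ≠ 0 → A i i = A j j := fun i j hij =>
    hdiag i j (not_not.1 fun hf => hij (hblock i j (Or.inl hf)))
  set T := insert 0 ((Finset.univ.image fun i => A i i).erase lam)
  have hlamT : lam ∉ T := by simp [T, hlam]
  obtain ⟨p, hp_one, hp_zero⟩ := exists_dvd_sub_one_and_forall_dvd hlamT (n + 1)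
  have hpA : aeval A p = diagonal fun i => if A i i = lam then 1 else 0 := by
    refine aeval_eq_diagonal_of_dvd hU hA (fun μ => if μ = lam then 1 else 0) (m := n + 1)
      (by simp) fun i => ?_
    by_cases h : A i i = lam
    · simpa [h] using hp_one
    · simpa [h] using hp_zero _ (by simp [T, h])
  have hXp : X ∣ p :=
    (dvd_pow_self X n.succ_ne_zero).trans (by simpa using hp_zero 0 (by simp [T]))
  exact hpA ▸ aeval_mem_span_pow_of_X_dvd A hXp

/-- If `A` is a Jordanesque matrix (block diagonal with blocks given by the fibers of the
monotone surjection `f`, each block upper triangular with constant main diagonal) and `λ ≠ 0`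
is one of its diagonal entries, then the diagonal matrix which is `1` exactly where the
diagonal of `A` equals `λ` lies in the (non-unital) algebra generated by `A`. -/
theorem diagonal_indicator_mem_span_powers (n k : ℕ) (f : Fin n → Fin k)
    (hmono : Monotone f) (hsurj : Function.Surjective f)
    (A : Mat n)
    (hblock : ∀ i j : Fin n, (f i ≠ f j ∨ j < i) → A i j = 0)
    (hdiag : ∀ i j : Fin n, f i = f j → A i i = A j j)
    (lam : ℂ) (hlam : lam ≠ 0) (i₀ : Fin n) (hi₀ : A i₀ i₀ = lam) :
    (Matrix.diagonal fun i => if A i i = lam then (1 : ℂ) else 0) ∈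
      Submodule.span ℂ {B : Mat n | ∃ m : ℕ, 1 ≤ m ∧ B = A ^ m} :=
  diagonal_indicator_mem_span_powers_general n k f A hblock hdiag lam hlam
end
end

section
/- Fix positive integers n₁,…,n_k with n₁ + ⋯ + n_k = n, and let 𝒜 ⊆ Mₙ(ℂ) be an operator algebra all of whose elements are (n₁,…,n_k)-Jordanesque. Then for every A ∈ 𝒜, the diagonal matrix whose diagonal entries agree with those of A belongs to 𝒜; consequently every A ∈ 𝒜 is the sum of a diagonal matrix in 𝒜 and a strictly upper triangular (nilpotent) matrix in 𝒜. -/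
open Matrix

noncomputable section

/-!
Let `A` be Jordanesque with diagonal `d`. By the Chinese remainder theorem there is a polynomial
`p` with `p ≡ c (mod (X - c)^(n+1))` for every `c ∈ {0} ∪ {dᵢ}`. On the block containing `i`,
`A - dᵢ` is strictly upper triangular, so row `i` of `(A - dᵢ)^n` vanishes and row `i` of `p(A)`
is `dᵢ eᵢ`; hence `p(A) = diag d`. Since `0` is among the residues, `X ∣ p`, so `p(A)` lies in
the non-unital algebra generated by `A`.
-/

open Polynomial

theorem Polynomial.exists_forall_pow_dvd_sub_C {K : Type*} [Field K] (s : Finset K) (m : ℕ) :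
    ∃ p : K[X], ∀ c ∈ s, (X - C c) ^ m ∣ p - C c := by
  have hcoprime : Pairwise fun c d : s =>
      IsCoprime (Ideal.span {(X - C (c : K)) ^ m}) (Ideal.span {(X - C (d : K)) ^ m}) := by
    intro c d hcd
    rw [Ideal.isCoprime_span_singleton_iff]
    exact (isCoprime_X_sub_C_of_isUnit_sub
      (sub_ne_zero.mpr (Subtype.coe_injective.ne hcd)).isUnit).pow
  obtain ⟨p, hp⟩ := Ideal.exists_forall_sub_mem_ideal hcoprime fun c => C (c : K)
  exact ⟨p, fun c hc => Ideal.mem_span_singleton.mp (hp ⟨c, hc⟩)⟩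

namespace NonUnitalSubalgebra

variable {R A : Type*} [CommSemiring R] [Semiring A] [Algebra R A]
  (T : NonUnitalSubalgebra R A) {a : A}

theorem pow_succ_mem_s7 (ha : a ∈ T) (k : ℕ) : a ^ (k + 1) ∈ T := by
  induction k with
  | zero => simpa using ha
  | succ k ih => rw [pow_succ]; exact T.mul_mem ih ha

theorem aeval_mem_of_X_dvd (ha : a ∈ T) {p : R[X]} (hp : X ∣ p) : aeval a p ∈ T := by
  obtain ⟨q, rfl⟩ := hp
  induction q using Polynomial.induction_on' with
  | add q r hq hr => rw [mul_add, map_add]; exact T.add_mem hq hr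
  | monomial k r =>
    rw [X_mul_monomial, aeval_monomial, ← Algebra.smul_def]
    exact T.smul_mem r (T.pow_succ_mem_s7 ha k)

end NonUnitalSubalgebra

def IsOpAlg.toNonUnitalSubalgebra {n : ℕ} {S : Set (Mat n)} (hS : IsOpAlg S) :
    NonUnitalSubalgebra ℂ (Mat n) where
  carrier := S
  zero_mem' := hS.1
  add_mem' hA hB := hS.2.1 _ hA _ hB
  smul_mem' c _ hA := hS.2.2.1 c _ hA
  mul_mem' hA hB := hS.2.2.2 _ hA _ hB

theorem Matrix.pow_apply_eq_zero_of_strictUpper_on {R : Type*} [Semiring R] {n : ℕ}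
    {M : Matrix (Fin n) (Fin n) R} {s : Set (Fin n)}
    (hM : ∀ i ∈ s, ∀ j, (j ∉ s ∨ j ≤ i) → M i j = 0) (m : ℕ) :
    ∀ i ∈ s, ∀ j, (j ∉ s ∨ (j : ℕ) < i + m) → (M ^ m) i j = 0 := by
  induction m with
  | zero =>
    rintro i hi j hj
    refine one_apply_ne fun hij => ?_
    subst hij
    simp_all
  | succ m ih =>
    rintro i hi j hj
    rw [pow_succ', mul_apply]
    refine Finset.sum_eq_zero fun t _ => ?_
    by_cases ht : t ∉ s ∨ t ≤ i
    · rw [hM i hi t ht, zero_mul]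
    · rw [not_or, not_not, not_le] at ht
      rw [ih t ht.1 j (hj.imp_right fun hj => by omega), mul_zero]

def IsJordanesque {R κ : Type*} [Zero R] {n : ℕ} (f : Fin n → κ)
    (A : Matrix (Fin n) (Fin n) R) : Prop :=
  (∀ i j : Fin n, (f i ≠ f j ∨ j < i) → A i j = 0) ∧ (∀ i j : Fin n, f i = f j → A i i = A j j)

namespace IsJordanesque

variable {R κ : Type*} {n : ℕ} {f : Fin n → κ}

theorem sub_diagonal_apply_eq_zero [AddGroup R] {A : Matrix (Fin n) (Fin n) R}
    (hA : IsJordanesque f A) {i j : Fin n} (hji : j ≤ i) :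
    (A - diagonal fun i => A i i) i j = 0 := by
  rcases hji.lt_or_eq with hlt | rfl
  · rw [Matrix.sub_apply, hA.1 i j (Or.inr hlt), diagonal_apply_ne _ hlt.ne', sub_zero]
  · rw [Matrix.sub_apply, diagonal_apply_eq, sub_self]

theorem aeval_eq_diagonal [CommRing R] {A : Matrix (Fin n) (Fin n) R}
    (hA : IsJordanesque f A) {p : R[X]} (hp : ∀ i, (X - C (A i i)) ^ n ∣ p - C (A i i)) :
    aeval A p = diagonal fun i => A i i := by
  ext i j
  obtain ⟨g, hg⟩ := hp i
  set N := A - algebraMap R _ (A i i)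
  have hN : ∀ i' ∈ {t | f t = f i}, ∀ j', (j' ∉ {t | f t = f i} ∨ j' ≤ i') → N i' j' = 0 := by
    rintro i' hi' j' hj'
    simp only [N, Matrix.sub_apply, algebraMap_matrix_apply, Algebra.algebraMap_self,
      RingHom.id_apply]
    split_ifs with hij
    · subst hij
      exact sub_eq_zero.mpr (hA.2 i' i hi')
    · refine (sub_zero _).trans (hA.1 i' j' ?_)
      exact hj'.imp (fun hj' h => hj' (hi'.symm.trans h).symm)
        fun hj' => lt_of_le_of_ne hj' (Ne.symm hij)
  have hNpow : ∀ t, (N ^ n) i t = 0 := fun t =>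
    pow_apply_eq_zero_of_strictUpper_on hN n i rfl t (Or.inr (by omega))
  have heval : aeval A p = algebraMap R _ (A i i) + N ^ n * aeval A g := by
    rw [← sub_eq_iff_eq_add', ← aeval_C A, ← map_sub, hg]
    simp [N]
  rw [heval, Matrix.add_apply, mul_apply,
    Finset.sum_eq_zero fun t _ => by rw [hNpow t, zero_mul], add_zero,
    algebraMap_matrix_apply, diagonal_apply]
  split_ifs with hij
  · subst hij; rfl
  · rfl

end IsJordanesque

theorem jordanesque_algebra_diag_add_nil_general (n k : ℕ) (f : Fin n → Fin k)
    (S : Set (Mat n)) (hS : IsOpAlg S)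
    (hJ : ∀ A ∈ S, (∀ i j : Fin n, (f i ≠ f j ∨ j < i) → A i j = 0) ∧
      (∀ i j : Fin n, f i = f j → A i i = A j j)) :
    ∀ A ∈ S, (Matrix.diagonal fun i => A i i) ∈ S ∧
      A - (Matrix.diagonal fun i => A i i) ∈ S ∧
      ∀ i j : Fin n, j ≤ i → (A - Matrix.diagonal fun i => A i i) i j = 0 := by
  intro A hA
  have hAJ : IsJordanesque f A := hJ A hA
  obtain ⟨p, hp⟩ :=
    exists_forall_pow_dvd_sub_C (insert 0 (Finset.univ.image fun i => A i i)) (n + 1)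
  have hXp : X ∣ p := by
    have h0 := hp 0 (Finset.mem_insert_self _ _)
    rw [map_zero, sub_zero, sub_zero] at h0
    exact (dvd_pow_self X n.succ_ne_zero).trans h0
  have hpA : aeval A p = diagonal fun i => A i i := hAJ.aeval_eq_diagonal fun i =>
    (pow_dvd_pow _ n.le_succ).trans (hp _ (Finset.mem_insert_of_mem (by simp)))
  have hD : (diagonal fun i => A i i) ∈ S :=
    hpA ▸ hS.toNonUnitalSubalgebra.aeval_mem_of_X_dvd hA hXp
  have hAD : A - (diagonal fun i => A i i) ∈ hS.toNonUnitalSubalgebra := sub_mem hA hD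
  exact ⟨hD, hAD, fun i j => hAJ.sub_diagonal_apply_eq_zero⟩

/-- If every element of the operator algebra `𝒜` is `(n₁,…,n_k)`-Jordanesque (block structure
given by the fibers of the monotone surjection `f`), then for every `A ∈ 𝒜` the diagonal matrix
with the same diagonal as `A` belongs to `𝒜`, and `A` is the sum of this diagonal matrix and a
strictly upper triangular matrix in `𝒜`. -/
theorem jordanesque_algebra_diag_add_nil (n k : ℕ) (f : Fin n → Fin k)
    (hmono : Monotone f) (hsurj : Function.Surjective f)
    (S : Set (Mat n)) (hS : IsOpAlg S)
    (hJ : ∀ A ∈ S, (∀ i j : Fin n, (f i ≠ f j ∨ j < i) → A i j = 0) ∧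
      (∀ i j : Fin n, f i = f j → A i i = A j j)) :
    ∀ A ∈ S, (Matrix.diagonal fun i => A i i) ∈ S ∧
      A - (Matrix.diagonal fun i => A i i) ∈ S ∧
      ∀ i j : Fin n, j ≤ i → (A - Matrix.diagonal fun i => A i i) i j = 0 :=
  jordanesque_algebra_diag_add_nil_general n k f S hS hJ
end
end

section
/- Let n > 1 and let v = (v₁,…,vₙ) be a basis of ℂⁿ. Let 𝒟_v ⊆ Mₙ(ℂ) be the set of all matrices for which each vᵢ is an eigenvector. Then 𝒟_v is hereditarily antisymmetric if and only if v is anti-orthogonal. -/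
open Matrix ContinuousLinearMap

noncomputable section

/-- `𝒟_v`: the matrices for which every `vᵢ` is an eigenvector. -/
def Dv {n : ℕ} (v : Module.Basis (Fin n) ℂ (Euc n)) : Set (Mat n) :=
  {A | ∀ i : Fin n, ∃ μ : ℂ, opOf A (v i) = μ • v i}

/-- `v` is anti-orthogonal: for all `i < j` and every subset `X` of the remaining indices,
`⟨Q vᵢ, vⱼ⟩ ≠ 0`, where `Q` is the orthogonal projection onto `(span{v_k : k ∈ X})ᗮ`. -/
def AntiOrth {n : ℕ} (v : Module.Basis (Fin n) ℂ (Euc n)) : Prop :=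
  ∀ i j : Fin n, i < j → ∀ X : Set (Fin n), i ∉ X → j ∉ X →
    (inner ℂ (oproj ((Submodule.span ℂ ((⇑v) '' X))ᗮ) (v i)) (v j) : ℂ) ≠ 0

/-!
The invariant subspaces of `Dv v` are the spans of subfamilies of `v`, so the semi-invariant ones
are `E = span{v_k : k ∈ Y} ⊓ span{v_k : k ∈ X}ᗮ` with `X ⊆ Y`. With `Q` the orthogonal projection
onto `span{v_k : k ∈ X}ᗮ`, the vectors `w_k = Q v_k` (`k ∈ Y \ X`) form a basis of `E` of common
eigenvectors of all compressions: `PAP w_k = μ_k w_k`. If `PAP = (PBP)*`, then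
`conj μ_k ⟪w_k, w_l⟫ = ν_l ⟪w_k, w_l⟫`, and anti-orthogonality says precisely that the Gram matrix
`⟪w_k, w_l⟫ = ⟪Q v_k, v_l⟫` has no zero entry, which forces `μ` to be constant on `Y \ X`.
Conversely, if `w_i ⊥ w_j`, compressing the spectral projection onto `v_i` to `Y = X ∪ {i, j}`
gives the orthogonal projection onto `w_i`: self-adjoint, but not a scalar.
-/

open Submodule

local notation "⟪" x ", " y "⟫" => @inner ℂ _ _ x y

section Compression

variable {n : ℕ}

lemma oproj_eq_starProjection (E : Submodule ℂ (Euc n)) : oproj E = E.starProjection := rfl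

lemma compr_apply (E : Submodule ℂ (Euc n)) (A : Mat n) (x : Euc n) :
    compr E A x = E.starProjection (opOf A (E.starProjection x)) := rfl

lemma compr_starProjection_apply (E : Submodule ℂ (Euc n)) (A : Mat n) (x : Euc n) :
    compr E A (E.starProjection x) = compr E A x := by
  rw [compr_apply, compr_apply, starProjection_eq_self_iff.mpr (starProjection_apply_mem E x)]

end Compression

namespace Module.Basis

variable {n : ℕ} (v : Module.Basis (Fin n) ℂ (Euc n))

def diagMat (μ : Fin n → ℂ) : Mat n :=
  (Matrix.toEuclideanCLM (𝕜 := ℂ) (n := Fin n)).symm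
    (LinearMap.toContinuousLinearMap (v.constr ℂ fun i => μ i • v i))

lemma opOf_diagMat_apply (μ : Fin n → ℂ) (x : Euc n) :
    opOf (v.diagMat μ) x = ∑ i, (v.repr x i * μ i) • v i := by
  simp [opOf, diagMat, constr_apply_fintype, smul_smul]

lemma opOf_diagMat_apply_self (μ : Fin n → ℂ) (k : Fin n) :
    opOf (v.diagMat μ) (v k) = μ k • v k := by
  simp [opOf, diagMat]

lemma diagMat_mem_Dv (μ : Fin n → ℂ) : v.diagMat μ ∈ Dv v :=
  fun k => ⟨μ k, v.opOf_diagMat_apply_self μ k⟩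

lemma opOf_diagMat_single_apply (k : Fin n) (x : Euc n) :
    opOf (v.diagMat (Pi.single k 1)) x = v.repr x k • v k := by
  simp [opOf_diagMat_apply, Pi.single_apply]

lemma invariantSub_Dv_span (Z : Set (Fin n)) : InvariantSub (Dv v) (span ℂ (v '' Z)) := by
  intro A hA
  suffices span ℂ (v '' Z) ≤ (span ℂ (v '' Z)).comap (opOf A).toLinearMap from fun x hx => this hx
  refine span_le.mpr ?_
  rintro _ ⟨k, hk, rfl⟩
  obtain ⟨μ, hμ⟩ := hA k
  rw [SetLike.mem_coe, mem_comap, ContinuousLinearMap.coe_coe, hμ]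
  exact smul_mem _ _ (subset_span ⟨k, hk, rfl⟩)

lemma eq_span_of_invariantSub_Dv {E : Submodule ℂ (Euc n)} (hE : InvariantSub (Dv v) E) :
    E = span ℂ (v '' {i | v i ∈ E}) := by
  refine le_antisymm (fun x hx => ?_) (span_le.mpr ?_)
  · rw [← v.sum_repr x]
    refine sum_mem fun k _ => ?_
    by_cases hk : v.repr x k = 0
    · simp [hk]
    refine smul_mem _ _ (subset_span ⟨k, ?_, rfl⟩)
    have hkx := hE _ (v.diagMat_mem_Dv (Pi.single k 1)) x hx
    rwa [opOf_diagMat_single_apply, smul_mem_iff _ hk] at hkx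
  · rintro _ ⟨i, hi, rfl⟩
    exact hi

def semiSpan (X Y : Set (Fin n)) : Submodule ℂ (Euc n) :=
  span ℂ (v '' Y) ⊓ (span ℂ (v '' X))ᗮ

lemma semiInvariantSub_Dv_iff {E : Submodule ℂ (Euc n)} :
    SemiInvariantSub (Dv v) E ↔ ∃ X Y, X ⊆ Y ∧ E = v.semiSpan X Y := by
  constructor
  · rintro ⟨E₁, E₂, h₁, h₂, hle, rfl⟩
    refine ⟨{i | v i ∈ E₂}, {i | v i ∈ E₁}, fun i hi => hle hi, ?_⟩
    rw [semiSpan, ← v.eq_span_of_invariantSub_Dv h₁, ← v.eq_span_of_invariantSub_Dv h₂]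
  · rintro ⟨X, Y, hXY, rfl⟩
    exact ⟨_, _, v.invariantSub_Dv_span Y, v.invariantSub_Dv_span X,
      span_mono (Set.image_mono hXY), rfl⟩

/-- The vector `Q v_k` of `AntiOrth`. -/
def perpVec (X : Set (Fin n)) (k : Fin n) : Euc n :=
  (span ℂ (v '' X))ᗮ.starProjection (v k)

variable {v}

lemma mem_semiSpan {X Y : Set (Fin n)} {y : Euc n} :
    y ∈ v.semiSpan X Y ↔ y ∈ span ℂ (v '' Y) ∧ y ∈ (span ℂ (v '' X))ᗮ :=
  mem_inf

lemma perpVec_mem_orthogonal (X : Set (Fin n)) (k : Fin n) :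
    v.perpVec X k ∈ (span ℂ (v '' X))ᗮ :=
  starProjection_apply_mem _ _

lemma sub_perpVec_mem_span (X : Set (Fin n)) (k : Fin n) :
    v k - v.perpVec X k ∈ span ℂ (v '' X) := by
  rw [perpVec, starProjection_orthogonal_val, sub_sub_cancel]
  exact starProjection_apply_mem _ _

lemma perpVec_eq_zero {X : Set (Fin n)} {k : Fin n} (hk : k ∈ X) : v.perpVec X k = 0 :=
  starProjection_orthogonal_apply_eq_zero (subset_span ⟨k, hk, rfl⟩)

lemma perpVec_ne_zero {X : Set (Fin n)} {k : Fin n} (hk : k ∉ X) : v.perpVec X k ≠ 0 := by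
  intro h
  apply hk
  rw [← v.self_mem_span_image]
  simpa [h] using sub_perpVec_mem_span (v := v) X k

lemma inner_perpVec_perpVec (X : Set (Fin n)) (k l : Fin n) :
    ⟪v.perpVec X k, v.perpVec X l⟫ = ⟪v.perpVec X k, v l⟫ := by
  calc ⟪v.perpVec X k, v.perpVec X l⟫
      = ⟪(span ℂ (v '' X))ᗮ.starProjection (v.perpVec X k), v l⟫ :=
        (inner_starProjection_left_eq_right _ _ _).symm
    _ = ⟪v.perpVec X k, v l⟫ := by
        rw [starProjection_eq_self_iff.mpr (perpVec_mem_orthogonal X k)]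

lemma sum_repr_smul_perpVec {X : Set (Fin n)} {y : Euc n} (hy : y ∈ (span ℂ (v '' X))ᗮ) :
    ∑ k, v.repr y k • v.perpVec X k = y := by
  simp_rw [perpVec, ← map_smul, ← map_sum, v.sum_repr, starProjection_eq_self_iff.mpr hy]

lemma repr_eq_zero_of_mem_semiSpan {X Y : Set (Fin n)} {y : Euc n} (hy : y ∈ v.semiSpan X Y)
    {k : Fin n} (hk : k ∉ Y) : v.repr y k = 0 :=
  Finsupp.notMem_support_iff.mp fun hk' =>
    hk (v.repr_support_subset_of_mem_span Y (mem_semiSpan.mp hy).1 hk')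

lemma perpVec_mem_semiSpan {X Y : Set (Fin n)} (hXY : X ⊆ Y) {k : Fin n} (hk : k ∈ Y) :
    v.perpVec X k ∈ v.semiSpan X Y := by
  refine mem_semiSpan.mpr ⟨?_, perpVec_mem_orthogonal X k⟩
  simpa using sub_mem (subset_span (Set.mem_image_of_mem v hk))
    (span_mono (Set.image_mono hXY) (sub_perpVec_mem_span X k))

lemma span_le_orthogonal_semiSpan (X Y : Set (Fin n)) :
    span ℂ (v '' X) ≤ (v.semiSpan X Y)ᗮ :=
  le_orthogonal_orthogonal _ |>.trans (orthogonal_le inf_le_right)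

lemma starProjection_semiSpan_apply_self {X Y : Set (Fin n)} (hXY : X ⊆ Y) {k : Fin n}
    (hk : k ∈ Y) : (v.semiSpan X Y).starProjection (v k) = v.perpVec X k :=
  eq_starProjection_of_mem_orthogonal' (perpVec_mem_semiSpan hXY hk)
    (span_le_orthogonal_semiSpan X Y (sub_perpVec_mem_span X k)) (add_sub_cancel _ _).symm

section Eigen

variable {A : Mat n} {μ : Fin n → ℂ} (hA : ∀ k, opOf A (v k) = μ k • v k)
include hA

/-- The `perpVec`s are eigenvectors of the compression, since `A` leaves `span{v_k : k ∈ X}`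
invariant and `perpVec X k ≡ v k` modulo that span. -/
lemma compr_semiSpan_perpVec {X Y : Set (Fin n)} (hXY : X ⊆ Y) {k : Fin n} (hk : k ∈ Y) :
    compr (v.semiSpan X Y) A (v.perpVec X k) = μ k • v.perpVec X k := by
  set P := (v.semiSpan X Y).starProjection
  have hAu : opOf A (v k - v.perpVec X k) ∈ span ℂ (v '' X) :=
    v.invariantSub_Dv_span X A (fun k => ⟨μ k, hA k⟩) _ (sub_perpVec_mem_span X k)
  calc compr (v.semiSpan X Y) A (v.perpVec X k)
      = P (opOf A (v k) - opOf A (v k - v.perpVec X k)) := by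
        rw [compr_apply, starProjection_eq_self_iff.mpr (perpVec_mem_semiSpan hXY hk), ← map_sub,
          sub_sub_cancel]
    _ = μ k • P (v k) := by
        rw [map_sub, (starProjection_apply_eq_zero_iff _).mpr (span_le_orthogonal_semiSpan X Y hAu),
          sub_zero, hA, map_smul]
    _ = μ k • v.perpVec X k := by rw [starProjection_semiSpan_apply_self hXY hk]

lemma compr_semiSpan_eq_smul {X Y : Set (Fin n)} (hXY : X ⊆ Y) {c : ℂ}
    (hc : ∀ k ∈ Y, k ∉ X → μ k = c) :
    compr (v.semiSpan X Y) A = c • oproj (v.semiSpan X Y) := by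
  ext1 x
  rw [← compr_starProjection_apply, _root_.smul_apply, oproj_eq_starProjection]
  have hy := starProjection_apply_mem (v.semiSpan X Y) x
  generalize (v.semiSpan X Y).starProjection x = y at hy ⊢
  rw [← sum_repr_smul_perpVec (mem_semiSpan.mp hy).2, map_sum, Finset.smul_sum]
  refine Finset.sum_congr rfl fun k _ => ?_
  by_cases hkY : k ∈ Y
  · by_cases hkX : k ∈ X
    · simp [perpVec_eq_zero hkX]
    · rw [map_smul, compr_semiSpan_perpVec hA hXY hkY, hc k hkY hkX, smul_comm]
  · simp [repr_eq_zero_of_mem_semiSpan hy hkY]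

lemma conj_mul_inner_perpVec_eq {B : Mat n} {ν : Fin n → ℂ} (hB : ∀ k, opOf B (v k) = ν k • v k)
    {X Y : Set (Fin n)} (hXY : X ⊆ Y)
    (hAB : compr (v.semiSpan X Y) A = adjoint (compr (v.semiSpan X Y) B))
    {k l : Fin n} (hk : k ∈ Y) (hl : l ∈ Y) :
    starRingEnd ℂ (μ k) * ⟪v.perpVec X k, v.perpVec X l⟫
      = ν l * ⟪v.perpVec X k, v.perpVec X l⟫ := by
  have h := adjoint_inner_left (compr (v.semiSpan X Y) B) (v.perpVec X l) (v.perpVec X k)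
  rwa [← hAB, compr_semiSpan_perpVec hA hXY hk, compr_semiSpan_perpVec hB hXY hl,
    inner_smul_left, inner_smul_right] at h

end Eigen

lemma antiOrth_iff_inner_perpVec_ne_zero :
    AntiOrth v ↔ ∀ X k l, k ∉ X → l ∉ X → ⟪v.perpVec X k, v.perpVec X l⟫ ≠ 0 := by
  refine ⟨fun h X k l hk hl => ?_, fun h i j _ X hi hj => ?_⟩
  · rcases lt_trichotomy k l with hkl | rfl | hlk
    · rw [inner_perpVec_perpVec]
      exact h k l hkl X hk hl
    · exact inner_self_ne_zero.mpr (perpVec_ne_zero hk)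
    · rw [← inner_conj_symm, inner_perpVec_perpVec, map_ne_zero]
      exact h l k hlk X hl hk
  · have hij := h X i j hi hj
    rwa [inner_perpVec_perpVec] at hij

lemma herAntisym_Dv_of_inner_perpVec_ne_zero
    (h : ∀ X k l, k ∉ X → l ∉ X → ⟪v.perpVec X k, v.perpVec X l⟫ ≠ 0) : HerAntisym (Dv v) := by
  intro E hE A hA B hB hAB
  obtain ⟨X, Y, hXY, rfl⟩ := v.semiInvariantSub_Dv_iff.mp hE
  choose μ hμ using hA
  choose ν hν using hB
  have hconj : ∀ k ∈ Y, k ∉ X → ∀ l ∈ Y, l ∉ X → starRingEnd ℂ (μ k) = ν l :=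
    fun k hkY hkX l hlY hlX =>
      mul_right_cancel₀ (h X k l hkX hlX) (conj_mul_inner_perpVec_eq hμ hν hXY hAB hkY hlY)
  by_cases hne : ∃ k₀ ∈ Y, k₀ ∉ X
  · obtain ⟨k₀, hk₀Y, hk₀X⟩ := hne
    refine ⟨μ k₀, compr_semiSpan_eq_smul hμ hXY fun k hkY hkX => (starRingEnd ℂ).injective ?_⟩
    exact (hconj k hkY hkX k₀ hk₀Y hk₀X).trans (hconj k₀ hk₀Y hk₀X k₀ hk₀Y hk₀X).symm
  · exact ⟨0, compr_semiSpan_eq_smul hμ hXY fun k hkY hkX => absurd ⟨k, hkY, hkX⟩ hne⟩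

lemma compr_diagMat_single_eq_starProjection {X : Set (Fin n)} {i j : Fin n} (hij : i ≠ j)
    (h0 : ⟪v.perpVec X i, v.perpVec X j⟫ = 0) :
    compr (v.semiSpan X (insert i (insert j X))) (v.diagMat (Pi.single i 1))
      = (ℂ ∙ v.perpVec X i).starProjection := by
  set E := v.semiSpan X (insert i (insert j X))
  have hXY : X ⊆ insert i (insert j X) := (Set.subset_insert _ _).trans (Set.subset_insert _ _)
  have hiE : v.perpVec X i ∈ E := perpVec_mem_semiSpan hXY (by simp)
  ext1 x
  set y := E.starProjection x
  have hy : y ∈ E := starProjection_apply_mem _ x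
  obtain ⟨a, b, hab⟩ : ∃ a b : ℂ, y = a • v.perpVec X i + b • v.perpVec X j := by
    refine ⟨v.repr y i, v.repr y j, ?_⟩
    conv_lhs => rw [← sum_repr_smul_perpVec (mem_semiSpan.mp hy).2]
    refine Fintype.sum_eq_add i j hij fun k ⟨hki, hkj⟩ => ?_
    by_cases hkX : k ∈ X
    · rw [perpVec_eq_zero hkX, smul_zero]
    · rw [repr_eq_zero_of_mem_semiSpan hy (by simp [hki, hkj, hkX]), zero_smul]
  have hA := v.opOf_diagMat_apply_self (Pi.single i 1)
  calc compr E (v.diagMat (Pi.single i 1)) x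
      = compr E (v.diagMat (Pi.single i 1)) y := (compr_starProjection_apply E _ x).symm
    _ = a • v.perpVec X i := by
        rw [hab, map_add, map_smul, map_smul, compr_semiSpan_perpVec hA hXY (by simp),
          compr_semiSpan_perpVec hA hXY (by simp)]
        simp [hij.symm]
    _ = (ℂ ∙ v.perpVec X i).starProjection y := by
        rw [hab, map_add, map_smul, map_smul,
          starProjection_eq_self_iff.mpr (mem_span_singleton_self _),
          (starProjection_apply_eq_zero_iff _).mpr (mem_orthogonal_singleton_iff_inner_right.mpr h0),
          smul_zero, add_zero]
    _ = (ℂ ∙ v.perpVec X i).starProjection x := by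
        rw [← ContinuousLinearMap.comp_apply,
          starProjection_comp_starProjection_of_le (span_singleton_le_iff_mem _ _ |>.mpr hiE)]

lemma inner_perpVec_ne_zero_of_herAntisym (h : HerAntisym (Dv v)) {X : Set (Fin n)}
    {i j : Fin n} (hi : i ∉ X) (hj : j ∉ X) : ⟪v.perpVec X i, v.perpVec X j⟫ ≠ 0 := by
  intro h0
  have hij : i ≠ j := by
    rintro rfl
    exact perpVec_ne_zero hi (inner_self_eq_zero.mp h0)
  have hP := compr_diagMat_single_eq_starProjection hij h0
  have hXY : X ⊆ insert i (insert j X) := (Set.subset_insert _ _).trans (Set.subset_insert _ _)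
  obtain ⟨c, hc⟩ := h _ (v.semiInvariantSub_Dv_iff.mpr ⟨X, _, hXY, rfl⟩) _ (v.diagMat_mem_Dv _)
    _ (v.diagMat_mem_Dv _) (by rw [hP, (isSelfAdjoint_starProjection _).adjoint_eq])
  rw [hP, oproj_eq_starProjection] at hc
  have hwi := congr($hc (v.perpVec X i))
  have hwj := congr($hc (v.perpVec X j))
  rw [starProjection_eq_self_iff.mpr (mem_span_singleton_self _), _root_.smul_apply,
    starProjection_eq_self_iff.mpr (perpVec_mem_semiSpan hXY (by simp))] at hwi
  rw [(starProjection_apply_eq_zero_iff _).mpr (mem_orthogonal_singleton_iff_inner_right.mpr h0),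
    _root_.smul_apply, starProjection_eq_self_iff.mpr (perpVec_mem_semiSpan hXY (by simp)),
    eq_comm, smul_eq_zero] at hwj
  rcases hwj with rfl | hwj
  · exact perpVec_ne_zero hi (by simpa using hwi)
  · exact perpVec_ne_zero hj hwj

end Module.Basis

theorem Dv_herAntisym_iff_antiOrth_general (n : ℕ) (v : Module.Basis (Fin n) ℂ (Euc n)) :
    HerAntisym (Dv v) ↔ AntiOrth v := by
  rw [Module.Basis.antiOrth_iff_inner_perpVec_ne_zero]
  exact ⟨fun h _ _ _ hk hl => Module.Basis.inner_perpVec_ne_zero_of_herAntisym h hk hl,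
    Module.Basis.herAntisym_Dv_of_inner_perpVec_ne_zero⟩

/-- For a basis `v` of `ℂⁿ` (`n > 1`), `𝒟_v` is hereditarily antisymmetric if and only if
`v` is anti-orthogonal. -/
theorem Dv_herAntisym_iff_antiOrth (n : ℕ) (hn : 1 < n) (v : Module.Basis (Fin n) ℂ (Euc n)) :
    HerAntisym (Dv v) ↔ AntiOrth v :=
  Dv_herAntisym_iff_antiOrth_general n v
end
end

section
/- Let 𝒜 ⊆ Mₙ(ℂ) be an operator algebra all of whose elements are upper triangular matrices. Then there exists A ∈ 𝒜 such that every main diagonal entry of A is real, and for all indices i, j: if A_{ii} = A_{jj} then B_{ii} = B_{jj} for every B ∈ 𝒜. -/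
/-!
The diagonal of an upper triangular matrix is multiplicative, so the diagonals of the algebra form
a non-unital subalgebra `W` of `ℂⁿ`, and the claim only concerns `W`. Since `ℂ` is infinite, a
generic element `w` of `W` separates every pair of coordinates that `W` separates at all. Composing
`w` with a polynomial without constant term stays inside `W`; Lagrange interpolation gives one that
maps the finitely many values of `w` injectively into `ℝ`.
-/

open Matrix

noncomputable section

open Polynomial

theorem Matrix.IsUpperTriangular.diag_mul {m R : Type*} [Fintype m] [LinearOrder m]
    [NonUnitalNonAssocSemiring R] {M N : Matrix m m R} (hM : M.IsUpperTriangular)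
    (hN : N.IsUpperTriangular) : (M * N).diag = M.diag * N.diag := by
  ext i
  simp only [diag_apply, Pi.mul_apply, mul_apply]
  refine Fintype.sum_eq_single i fun k hk => ?_
  rcases hk.lt_or_gt with hki | hik
  · rw [hM hki, zero_mul]
  · rw [hN hik, mul_zero]

theorem LinearMap.exists_forall_apply_ne_zero {K E F ι : Type*} [Field K] [Infinite K]
    [AddCommGroup E] [Module K E] [AddCommGroup F] [Module K F] [Finite ι] (f : ι → E →ₗ[K] F) :
    ∃ x, ∀ i, f i ≠ 0 → f i x ≠ 0 := by
  have hcover : ⋃ i : {i // f i ≠ 0}, (LinearMap.ker (f i) : Set E) ≠ Set.univ := fun h => by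
    obtain ⟨⟨i, hi⟩, htop⟩ := Subspace.exists_eq_top_of_iUnion_eq_univ h
    exact hi (LinearMap.ker_eq_top.mp htop)
  obtain ⟨x, hx⟩ := (Set.ne_univ_iff_exists_notMem _).mp hcover
  simp only [Set.mem_iUnion, not_exists] at hx
  exact ⟨x, fun i hi => hx ⟨i, hi⟩⟩

theorem Submodule.exists_mem_separating {K X : Type*} [Field K] [Infinite K] [Finite X]
    (W : Submodule K (X → K)) : ∃ w ∈ W, ∀ i j, w i = w j → ∀ v ∈ W, v i = v j := by
  let f : X × X → W →ₗ[K] K := fun p =>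
    (LinearMap.proj (R := K) (φ := fun _ : X => K) p.1 - LinearMap.proj p.2) ∘ₗ W.subtype
  obtain ⟨w, hw⟩ := LinearMap.exists_forall_apply_ne_zero f
  refine ⟨w, w.2, fun i j hij v hv => ?_⟩
  by_contra hne
  have hf : f (i, j) ≠ 0 := fun h => hne (sub_eq_zero.mp (LinearMap.congr_fun h ⟨v, hv⟩))
  exact hw (i, j) hf (sub_eq_zero.mpr hij)

theorem NonUnitalSubalgebra.aeval_mem {R A : Type*} [CommSemiring R] [Semiring A] [Algebra R A]
    {W : NonUnitalSubalgebra R A} {x : A} (hx : x ∈ W) {p : R[X]} (hp : p.coeff 0 = 0) :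
    aeval x p ∈ W := by
  suffices h : ∀ q : R[X], x * aeval x q ∈ W by
    rw [← X_mul_divX_add p, hp, map_zero, add_zero, map_mul, aeval_X]
    exact h _
  intro q
  induction q using Polynomial.induction_on with
  | C a =>
    rw [aeval_C, ← Algebra.commutes, ← Algebra.smul_def]
    exact W.smul_mem a hx
  | add q r hq hr => simpa [mul_add] using W.add_mem hq hr
  | monomial k a ih =>
    simpa [pow_succ, ← mul_assoc] using W.mul_mem ih hx

theorem exists_polynomial_injOn_real {T : Set ℂ} (hT : T.Finite) :
    ∃ p : ℂ[X], p.coeff 0 = 0 ∧ (∀ z ∈ T, (p.eval z).im = 0) ∧ T.InjOn p.eval := by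
  classical
  obtain ⟨e⟩ : Nonempty (ℂ ≃ ℝ) := Cardinal.eq.mp (Cardinal.mk_complex.trans Cardinal.mk_real.symm)
  -- `0` is a node, so subtracting its real label removes the constant term.
  let nodes := insert 0 hT.toFinset
  let p := Lagrange.interpolate nodes id (fun z => (e z : ℂ)) - C (e 0 : ℂ)
  have hp : ∀ z ∈ nodes, p.eval z = (e z - e 0 : ℝ) := fun z hz => by
    have h := Lagrange.eval_interpolate_at_node (fun z => (e z : ℂ)) Function.injective_id.injOn hz
    rw [id_eq] at h
    rw [eval_sub, eval_C, h, Complex.ofReal_sub]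
  have hnode : ∀ z ∈ T, z ∈ nodes := fun z hz => Finset.mem_insert_of_mem (hT.mem_toFinset.mpr hz)
  refine ⟨p, ?_, fun z hz => by rw [hp z (hnode z hz), Complex.ofReal_im], fun z hz z' hz' h => ?_⟩
  · rw [coeff_zero_eq_eval_zero, hp 0 (Finset.mem_insert_self _ _), sub_self, Complex.ofReal_zero]
  · dsimp only at h
    rw [hp z (hnode z hz), hp z' (hnode z' hz'), Complex.ofReal_inj, sub_left_inj] at h
    exact e.injective h

theorem NonUnitalSubalgebra.exists_mem_real_separating {X : Type*} [Finite X]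
    (W : NonUnitalSubalgebra ℂ (X → ℂ)) :
    ∃ w ∈ W, (∀ i, (w i).im = 0) ∧ ∀ i j, w i = w j → ∀ v ∈ W, v i = v j := by
  obtain ⟨w, hwW, hw⟩ := W.toSubmodule.exists_mem_separating
  obtain ⟨p, hp0, hreal, hinj⟩ := exists_polynomial_injOn_real (Set.finite_range w)
  have hpw : ∀ i, aeval w p i = p.eval (w i) := fun i => by simp
  refine ⟨aeval w p, W.aeval_mem hwW hp0, fun i => ?_, fun i j hij => ?_⟩
  · rw [hpw]
    exact hreal _ (Set.mem_range_self i)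
  · rw [hpw, hpw] at hij
    exact hw i j (hinj (Set.mem_range_self i) (Set.mem_range_self j) hij)

def IsOpAlg.diagSubalgebra {n : ℕ} {S : Set (Mat n)} (hS : IsOpAlg S)
    (hut : ∀ A ∈ S, A.IsUpperTriangular) : NonUnitalSubalgebra ℂ (Fin n → ℂ) where
  carrier := diag '' S
  zero_mem' := ⟨0, hS.1, diag_zero⟩
  add_mem' := by
    rintro _ _ ⟨A, hA, rfl⟩ ⟨B, hB, rfl⟩
    exact ⟨A + B, hS.2.1 A hA B hB, diag_add A B⟩
  smul_mem' c := by
    rintro _ ⟨A, hA, rfl⟩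
    exact ⟨c • A, hS.2.2.1 c A hA, diag_smul c A⟩
  mul_mem' := by
    rintro _ _ ⟨A, hA, rfl⟩ ⟨B, hB, rfl⟩
    exact ⟨A * B, hS.2.2.2 A hA B hB, (hut A hA).diag_mul (hut B hB)⟩

/-- In an operator algebra of upper triangular matrices there is an element `A` with real main
diagonal entries which separates the diagonals of all other elements: if `A_{ii} = A_{jj}` then
`B_{ii} = B_{jj}` for every `B` in the algebra. -/
theorem exists_real_diagonal_separating (n : ℕ) (S : Set (Mat n)) (hS : IsOpAlg S)
    (hut : ∀ A ∈ S, ∀ i j : Fin n, j < i → A i j = 0) :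
    ∃ A ∈ S, (∀ i : Fin n, (A i i).im = 0) ∧
      ∀ i j : Fin n, A i i = A j j → ∀ B ∈ S, B i i = B j j := by
  have hupper : ∀ A ∈ S, A.IsUpperTriangular := fun A hA _ _ => hut A hA _ _
  obtain ⟨_, ⟨A, hA, rfl⟩, hreal, hsep⟩ := (hS.diagSubalgebra hupper).exists_mem_real_separating
  exact ⟨A, hA, hreal, fun i j hij B hB => hsep i j hij B.diag ⟨B, hB, rfl⟩⟩
end
end
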